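/- arXiv:2303.08944 — 2 statements merged into one kernel-verified Lean document; each statement's English description precedes it below -/
import Mathlib

section
/- Convex hull VC bound (Blumer et al.): if H is a class of binary classifiers with VC dimension d, then the class of majority votes of T functions from H, H^T = {MAJ(h_1,...,h_T) : h_i ∈ H}, has VC dimension at most O(d T log T). -/
open scoped Classical

/-- A class `F` of binary functions on `Z` shatters a finite set `s`. -/
def Shatters {Z : Type*} (F : Set (Z → Bool)) (s : Finset Z) : Prop :=
  ∀ b : Z → Bool, ∃ f ∈ F, ∀ z ∈ s, f z = b z

/-- Majority vote of `T` binary classifiers: outputs `1` iff strictly more than half vote `1`. -/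
def MAJ {X : Type*} {T : ℕ} (hs : Fin T → X → Bool) (x : X) : Bool :=
  decide (T < 2 * (Finset.univ.filter (fun t => hs t x = true)).card)

/-!
If a majority vote of `T` voters from `H` shatters a set `s` of size `m`, all `2 ^ m` labelings of
`s` occur as its traces. But the trace of a majority vote on `s` is determined by the traces of
its `T` voters, of which there are at most `(e m / d) ^ d` each by the Sauer–Shelah lemma. Hence
`2 ^ m ≤ (e m / d) ^ (d T)`; writing `m = r d T` this reads `r log 2 ≤ 1 + log r + log T`, and
`log r ≤ r / e` forces `r ≤ 10 log T`.
-/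

open Finset Real

theorem Finset.card_shatterer_le_sum_vcDim_of_forall_subset {α : Type*} [DecidableEq α]
    {𝒜 : Finset (Finset α)} {s : Finset α} (h𝒜 : ∀ u ∈ 𝒜, u ⊆ s) :
    #𝒜.shatterer ≤ ∑ k ∈ Iic 𝒜.vcDim, (#s).choose k := by
  simp_rw [← card_powersetCard]
  refine (card_le_card fun t ht ↦ mem_biUnion.2 ⟨#t, ?_⟩).trans card_biUnion_le
  obtain ⟨u, hu, htu⟩ := (mem_shatterer.1 ht).exists_superset
  exact ⟨mem_Iic.2 (mem_shatterer.1 ht).card_le_vcDim,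
    mem_powersetCard.2 ⟨htu.trans (h𝒜 u hu), rfl⟩⟩

section Traces

variable {X : Type*}

def trace (f : X → Bool) (s : Finset X) : Finset X := s.filter (f · = true)

noncomputable def traces (F : Set (X → Bool)) (s : Finset X) : Finset (Finset X) :=
  s.powerset.filter fun u ↦ ∃ f ∈ F, trace f s = u

lemma traces_subset_powerset (F : Set (X → Bool)) (s : Finset X) :
    traces F s ⊆ s.powerset :=
  filter_subset _ _

lemma mem_traces {F : Set (X → Bool)} {s u : Finset X} :
    u ∈ traces F s ↔ ∃ f ∈ F, trace f s = u := by
  refine ⟨fun h ↦ (mem_filter.1 h).2, fun h ↦ mem_filter.2 ⟨?_, h⟩⟩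
  obtain ⟨f, -, rfl⟩ := h
  exact mem_powerset.2 (filter_subset _ s)

lemma traces_eq_powerset {F : Set (X → Bool)} {s : Finset X} (hF : Shatters F s) :
    traces F s = s.powerset := by
  refine (traces_subset_powerset F s).antisymm fun u hu ↦ mem_traces.2 ?_
  obtain ⟨f, hf, hfu⟩ := hF (fun x ↦ decide (x ∈ u))
  refine ⟨f, hf, ?_⟩
  rw [trace, filter_congr fun x hx ↦ by rw [hfu x hx, decide_eq_true_iff]]
  exact filter_mem_eq_inter.trans (inter_eq_right.2 (mem_powerset.1 hu))

lemma shatters_of_shatters_traces {F : Set (X → Bool)} {s t : Finset X}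
    (ht : (traces F s).Shatters t) : Shatters F t := by
  have hts : t ⊆ s := by
    obtain ⟨u, hu, htu⟩ := ht.exists_superset
    exact htu.trans (mem_powerset.1 (traces_subset_powerset F s hu))
  intro b
  obtain ⟨u, hu, htu⟩ := ht (filter_subset (b · = true) t)
  obtain ⟨f, hf, rfl⟩ := mem_traces.1 hu
  refine ⟨f, hf, fun x hx ↦ Bool.eq_iff_iff.2 ?_⟩
  have hx_mem := congrArg (x ∈ ·) htu
  simp only [trace, mem_inter, mem_filter, eq_iff_iff] at hx_mem
  have := hts hx
  tauto

lemma card_traces_le_sum_choose {F : Set (X → Bool)} {d : ℕ}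
    (hF : ∀ t : Finset X, Shatters F t → #t ≤ d) (s : Finset X) :
    #(traces F s) ≤ ∑ k ∈ Iic d, (#s).choose k := calc
  #(traces F s) ≤ #(traces F s).shatterer := card_le_card_shatterer _
  _ ≤ ∑ k ∈ Iic (traces F s).vcDim, (#s).choose k :=
    card_shatterer_le_sum_vcDim_of_forall_subset fun _ hu ↦
      mem_powerset.1 (traces_subset_powerset F s hu)
  _ ≤ ∑ k ∈ Iic d, (#s).choose k := by
    refine sum_le_sum_of_subset (Iic_subset_Iic.2 (Finset.sup_le fun t ht ↦ hF t ?_))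
    exact shatters_of_shatters_traces (mem_shatterer.1 ht)

lemma card_traces_comp_le {ι : Type*} [Fintype ι] (H : Set (X → Bool))
    (φ : (ι → Bool) → Bool) (s : Finset X) :
    #(traces {f | ∃ hs : ι → X → Bool, (∀ i, hs i ∈ H) ∧ ∀ x, f x = φ (fun i ↦ hs i x)} s)
      ≤ #(traces H s) ^ Fintype.card ι := by
  let combine (u : ι → Finset X) : Finset X := s.filter fun x ↦ φ (fun i ↦ decide (x ∈ u i))
  calc _ ≤ #((Fintype.piFinset fun _ ↦ traces H s).image combine) := by
        refine card_le_card fun v hv ↦ ?_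
        obtain ⟨f, ⟨hs, hsH, hf⟩, rfl⟩ := mem_traces.1 hv
        refine mem_image.2 ⟨fun i ↦ trace (hs i) s,
          Fintype.mem_piFinset.2 fun i ↦ mem_traces.2 ⟨hs i, hsH i, rfl⟩, filter_congr ?_⟩
        intro x hx
        simp [trace, hx, hf]
    _ ≤ #(Fintype.piFinset fun _ : ι ↦ traces H s) := card_image_le
    _ = #(traces H s) ^ Fintype.card ι := by simp

lemma card_traces_majority_le (H : Set (X → Bool)) (T : ℕ) (s : Finset X) :
    #(traces {f | ∃ hs : Fin T → X → Bool, (∀ t, hs t ∈ H) ∧ ∀ x, f x = MAJ hs x} s)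
      ≤ #(traces H s) ^ T := by
  have := card_traces_comp_le H (fun v : Fin T → Bool ↦ decide (T < 2 * #{t | v t = true})) s
  rwa [Fintype.card_fin] at this

end Traces

theorem sum_choose_le_exp_mul_div_pow {m d : ℕ} (hd : 0 < d) (hdm : d ≤ m) :
    ∑ k ∈ Iic d, (m.choose k : ℝ) ≤ (exp 1 * m / d) ^ d := by
  have hm : (0 : ℝ) < m := by exact_mod_cast hd.trans_le hdm
  set x : ℝ := d / m with hx
  have hx0 : 0 < x := by positivity
  have hx1 : x ≤ 1 := div_le_one_of_le₀ (by exact_mod_cast hdm) hm.le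
  -- weight the `k`-th term by `x ^ k ≥ x ^ d` and complete it to the binomial expansion
  have key : x ^ d * ∑ k ∈ Iic d, (m.choose k : ℝ) ≤ exp d := calc
    x ^ d * ∑ k ∈ Iic d, (m.choose k : ℝ) ≤ ∑ k ∈ Iic d, x ^ k * m.choose k := by
      rw [mul_sum]
      exact sum_le_sum fun k hk ↦
        mul_le_mul_of_nonneg_right (pow_le_pow_of_le_one hx0.le hx1 (mem_Iic.1 hk)) (by positivity)
    _ ≤ ∑ k ∈ range (m + 1), x ^ k * m.choose k :=
      sum_le_sum_of_subset_of_nonneg (fun k hk ↦ by simp at hk ⊢; omega) fun _ _ _ ↦ by positivity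
    _ = (1 + x) ^ m := by rw [add_comm 1 x, add_pow]; simp
    _ ≤ exp x ^ m := by gcongr; linarith [add_one_le_exp x]
    _ = exp d := by rw [← exp_nat_mul, hx]; field_simp
  calc ∑ k ∈ Iic d, (m.choose k : ℝ) ≤ exp d / x ^ d := (le_div_iff₀' (by positivity)).2 key
    _ = (exp 1 * m / d) ^ d := by
      rw [hx, div_pow, div_pow, mul_pow, ← exp_nat_mul, mul_one]; field_simp

lemma le_ten_mul_of_mul_log_two_le {r L : ℝ} (hr : 0 < r) (hL : log 2 ≤ L)
    (h : r * log 2 ≤ 1 + log r + L) : r ≤ 10 * L := by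
  have hlog2 : 0.6931 < log 2 := lt_trans (by norm_num) log_two_gt_d9
  have he : 2.718 < exp 1 := lt_trans (by norm_num) exp_one_gt_d9
  -- `log r ≤ r / e`: this is `log y ≤ y - 1` at `y = r / e`
  have hlog_r : log r ≤ r * 0.368 := by
    have hy := log_le_sub_one_of_pos (div_pos hr (exp_pos 1))
    rw [log_div hr.ne' (exp_ne_zero 1), log_exp] at hy
    have : r / exp 1 ≤ r * 0.368 := by rw [div_le_iff₀ (exp_pos 1)]; nlinarith
    linarith
  nlinarith

lemma le_mul_log_of_two_pow_le_exp_mul_div_pow {m d T : ℕ} (hm : 0 < m) (hd : 0 < d)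
    (hT : 2 ≤ T) (h : (2 : ℝ) ^ m ≤ (exp 1 * m / d) ^ (d * T)) :
    (m : ℝ) ≤ 10 * d * T * log T := by
  have hdT : (0 : ℝ) < d * T := by positivity
  set r : ℝ := m / (d * T) with hr
  have hm_eq : (m : ℝ) = r * (d * T) := by rw [hr]; field_simp
  have hlog : m * log 2 ≤ (d * T) * log (exp 1 * m / d) := by
    simpa [log_pow] using log_le_log (by positivity) h
  have hsplit : log (exp 1 * m / d) = 1 + log r + log T := by
    rw [show exp 1 * m / d = exp 1 * (r * T) by rw [hr]; field_simp,
      log_mul (exp_ne_zero 1) (by positivity), log_exp, log_mul (by positivity) (by positivity)]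
    ring
  have hrT : r * log 2 ≤ 1 + log r + log T := by
    rw [hsplit, hm_eq] at hlog
    nlinarith
  have hr_le := le_ten_mul_of_mul_log_two_le (by positivity) (log_le_log two_pos
    (by exact_mod_cast hT)) hrT
  calc (m : ℝ) = r * (d * T) := hm_eq
    _ ≤ 10 * log T * (d * T) := by gcongr
    _ = 10 * d * T * log T := by ring

theorem le_mul_log_of_two_pow_le_sum_choose_pow {m d T : ℕ} (hT : 2 ≤ T)
    (h : 2 ^ m ≤ (∑ k ∈ Iic d, m.choose k) ^ T) : (m : ℝ) ≤ 10 * d * T * log T := by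
  have hlogT : log 2 ≤ log T := log_le_log two_pos (by exact_mod_cast hT)
  have hlog2 : 0.6931 < log 2 := lt_trans (by norm_num) log_two_gt_d9
  obtain rfl | hd := d.eq_zero_or_pos
  · rw [← Nat.bot_eq_zero, Finset.Iic_bot] at h
    simp only [sum_singleton, Nat.bot_eq_zero, Nat.choose_zero_right, one_pow] at h
    obtain rfl : m = 0 := by
      by_contra hm
      exact (Nat.one_lt_two_pow hm).not_ge h
    simp
  obtain hmd | hdm := lt_or_ge m d
  · have h_one_le : (1 : ℝ) ≤ 10 * T * log T := by
      nlinarith [show (2 : ℝ) ≤ T by exact_mod_cast hT]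
    have hmd' : (m : ℝ) ≤ d := by exact_mod_cast hmd.le
    nlinarith
  refine le_mul_log_of_two_pow_le_exp_mul_div_pow (hd.trans_le hdm) hd hT ?_
  calc (2 : ℝ) ^ m ≤ (∑ k ∈ Iic d, (m.choose k : ℝ)) ^ T := by exact_mod_cast h
    _ ≤ ((exp 1 * m / d) ^ d) ^ T := by gcongr; exact sum_choose_le_exp_mul_div_pow hd hdm
    _ = (exp 1 * m / d) ^ (d * T) := by rw [pow_mul]

/-- Convex hull / majority-vote VC bound (Blumer et al.): if `H` has VC
dimension at most `d`, the class of majority votes of `T ≥ 2` functions from `H` has VC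
dimension `O(d T log T)`. -/
theorem stmt8 : ∃ C : ℝ, 0 < C ∧
    ∀ {X : Type} (H : Set (X → Bool)) (d T : ℕ), 2 ≤ T →
      (∀ s : Finset X, Shatters H s → s.card ≤ d) →
      ∀ s : Finset X,
        Shatters {f : X → Bool |
            ∃ hs : Fin T → X → Bool, (∀ t, hs t ∈ H) ∧ ∀ x, f x = MAJ hs x} s →
        (s.card : ℝ) ≤ C * d * T * Real.log T := by
  refine ⟨10, by norm_num, fun H d T hT hH s hs ↦ le_mul_log_of_two_pow_le_sum_choose_pow hT ?_⟩
  calc 2 ^ #s = #(traces _ s) := by rw [traces_eq_powerset hs, card_powerset]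
    _ ≤ #(traces H s) ^ T := card_traces_majority_le H T s
    _ ≤ (∑ k ∈ Iic d, (#s).choose k) ^ T :=
      Nat.pow_le_pow_left (card_traces_le_sum_choose hH s) T
end

section
/- Weighted no-regret to minimax guarantee (extension of Feige–Mansour–Schapire to general weights): the core inequality L*(1−η) − (ln k)/η ≤ L^{ON}_T holds, where for a dataset S = {(x_i,y_i)}_{i=1}^m with weights p_i > 0 summing to 1 and perturbation sets of size at most k, the per-perturbation weights are updated multiplicatively by factor (1+η) upon mistakes, L^{ON}_T = Σ_{t=1}^T Σ_{i=1}^m Σ_{z ∈ U(x_i)} p_i P^t(z,(x_i,y_i)) 1[h_t(z) ≠ y_i] is the algorithm's loss, and L* = max_P Σ_{t=1}^T Σ_i Σ_z p_i P(z,(x_i,y_i)) 1[h_t(z) ≠ y_i] is the best fixed per-example distribution's loss. Concretely: define w_1(z,i)=1, w_{t+1}(z,i) = (1+η 1[h_t(z)≠y_i]) w_t(z,i), P^t(z,i) = w_t(z,i)/Σ_{z'} w_t(z',i). Then for any η > 0, L* (1−η) − (ln k)/η ≤ L^{ON}_T. -/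
open scoped Classical

/-!
For a single example the argument is the usual multiplicative-weights potential argument. The
total weight `W_t = Σ_z w_t(z)` starts at `|U| ≤ k` and is multiplied in round `t` by
`1 + η F_t ≤ exp (η F_t)`, where `F_t` is the expected loss of `P^t`; so
`log W_T ≤ log k + η Σ_t F_t`. The weight of the best perturbation alone is at least `(1 + η)^L`, with
`L` its number of mistakes, and `log (1 + η) ≥ η - η²`, hence `L (η - η²) ≤ log k + η Σ_t F_t`.
Averaging these per-example inequalities with the weights `p_i` gives the theorem; this is the
logarithm of the paper's product potential `Π_i W_i^{p_i}`.
-/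

open Finset Real

lemma sub_sq_le_log_one_add {x : ℝ} (hx : 0 ≤ x) : x - x ^ 2 ≤ log (1 + x) := by
  refine le_trans ?_ (le_log_one_add_of_nonneg hx)
  rw [le_div_iff₀ (by linarith)]
  nlinarith [sq_nonneg x, pow_nonneg hx 3]

lemma mul_log_one_add_le_log_one_add_mul {a s : ℝ} (hs : 0 ≤ s) (ha₀ : 0 ≤ a) (ha₁ : a ≤ 1) :
    a * log (1 + s) ≤ log (1 + s * a) := by
  rw [← log_rpow (by linarith)]
  refine log_le_log (rpow_pos_of_pos (by linarith) a) ?_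
  rw [mul_comm s]
  exact rpow_one_add_le_one_add_mul_self (by linarith) ha₀ ha₁

lemma Fin.prod_filter_lt_eq_prod_range {M : Type*} [CommMonoid M] {T : ℕ} (f : ℕ → M)
    (t : Fin T) : ∏ s ∈ univ.filter (fun s : Fin T => s < t), f s = ∏ n ∈ range t, f n := by
  rw [filter_gt_eq_Iio, ← Nat.Iio_eq_range, ← Fin.map_valEmbedding_Iio, prod_map]
  rfl

namespace MultiplicativeWeights

variable {X : Type*} (U : Finset X) (η : ℝ) (c : ℕ → X → ℝ)

def weight (t : ℕ) (z : X) : ℝ := ∏ s ∈ range t, (1 + η * c s z)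

def totalWeight (t : ℕ) : ℝ := ∑ z ∈ U, weight η c t z

noncomputable def expectedLoss (t : ℕ) : ℝ := ∑ z ∈ U, weight η c t z / totalWeight U η c t * c t z

variable {U η c}

lemma weight_pos (hη : 0 ≤ η) (hc : ∀ t z, 0 ≤ c t z) (t : ℕ) (z : X) :
    0 < weight η c t z :=
  prod_pos fun s _ => by nlinarith [hc s z]

lemma totalWeight_pos (hU : U.Nonempty) (hη : 0 ≤ η) (hc : ∀ t z, 0 ≤ c t z) (t : ℕ) :
    0 < totalWeight U η c t :=
  sum_pos (fun z _ => weight_pos hη hc t z) hU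

lemma expectedLoss_nonneg (hη : 0 ≤ η) (hc : ∀ t z, 0 ≤ c t z) (t : ℕ) :
    0 ≤ expectedLoss U η c t := by
  rcases U.eq_empty_or_nonempty with rfl | hU
  · simp [expectedLoss]
  exact sum_nonneg fun z _ => mul_nonneg
    (div_nonneg (weight_pos hη hc t z).le (totalWeight_pos hU hη hc t).le) (hc t z)

lemma totalWeight_zero : totalWeight U η c 0 = #U := by
  simp [totalWeight, weight]

lemma totalWeight_succ {t : ℕ} (ht : totalWeight U η c t ≠ 0) :
    totalWeight U η c (t + 1) = totalWeight U η c t * (1 + η * expectedLoss U η c t) := by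
  have hmul : totalWeight U η c t * expectedLoss U η c t = ∑ z ∈ U, weight η c t z * c t z := by
    rw [expectedLoss, mul_sum]
    exact sum_congr rfl fun z _ => by field_simp
  calc totalWeight U η c (t + 1) = ∑ z ∈ U, (weight η c t z + η * (weight η c t z * c t z)) := by
        simp only [totalWeight, weight, prod_range_succ]
        exact sum_congr rfl fun z _ => by ring
    _ = totalWeight U η c t * (1 + η * expectedLoss U η c t) := by
        rw [sum_add_distrib, ← mul_sum, ← hmul, totalWeight]
        ring

lemma log_totalWeight_le (hU : U.Nonempty) (hη : 0 ≤ η) (hc : ∀ t z, 0 ≤ c t z) (T : ℕ) :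
    log (totalWeight U η c T) ≤ log #U + η * ∑ t ∈ range T, expectedLoss U η c t := by
  induction T with
  | zero => simp [totalWeight_zero]
  | succ T ih =>
    have hW := totalWeight_pos hU hη hc T
    have hF : 0 < 1 + η * expectedLoss U η c T := by
      nlinarith [expectedLoss_nonneg (U := U) hη hc T]
    rw [totalWeight_succ hW.ne', log_mul hW.ne' hF.ne', sum_range_succ]
    linarith [log_le_sub_one_of_pos hF]

lemma sum_mul_log_one_add_le_log_weight (hη : 0 ≤ η) (hc₀ : ∀ t z, 0 ≤ c t z)
    (hc₁ : ∀ t z, c t z ≤ 1) (T : ℕ) (z : X) :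
    (∑ t ∈ range T, c t z) * log (1 + η) ≤ log (weight η c T z) := by
  have hfactor : ∀ s, 1 + η * c s z ≠ 0 := fun s => by nlinarith [mul_nonneg hη (hc₀ s z)]
  rw [weight, log_prod fun s _ => hfactor s, sum_mul]
  exact sum_le_sum fun t _ => mul_log_one_add_le_log_one_add_mul hη (hc₀ t z) (hc₁ t z)

theorem regret_bound (hU : U.Nonempty) (hη : 0 < η) (hc₀ : ∀ t z, 0 ≤ c t z)
    (hc₁ : ∀ t z, c t z ≤ 1) (T : ℕ) :
    U.sup' hU (fun z => ∑ t ∈ range T, c t z) * (1 - η) - log #U / η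
      ≤ ∑ t ∈ range T, expectedLoss U η c t := by
  obtain ⟨z₀, hz₀, hsup⟩ := exists_mem_eq_sup' hU (fun z => ∑ t ∈ range T, c t z)
  set L := ∑ t ∈ range T, c t z₀
  have hL : 0 ≤ L := sum_nonneg fun t _ => hc₀ t z₀
  have key : L * (η - η ^ 2) ≤ log #U + η * ∑ t ∈ range T, expectedLoss U η c t :=
    calc L * (η - η ^ 2) ≤ L * log (1 + η) :=
          mul_le_mul_of_nonneg_left (sub_sq_le_log_one_add hη.le) hL
      _ ≤ log (weight η c T z₀) := sum_mul_log_one_add_le_log_weight hη.le hc₀ hc₁ T z₀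
      _ ≤ log (totalWeight U η c T) :=
          log_le_log (weight_pos hη.le hc₀ T z₀)
            (single_le_sum (fun z _ => (weight_pos hη.le hc₀ T z).le) hz₀)
      _ ≤ _ := log_totalWeight_le hU hη.le hc₀ T
  rw [hsup, sub_le_iff_le_add, ← sub_nonneg]
  have : ∑ t ∈ range T, expectedLoss U η c t + log #U / η - L * (1 - η)
      = (log #U + η * ∑ t ∈ range T, expectedLoss U η c t - L * (η - η ^ 2)) / η := by
    field_simp
    ring
  rw [this]
  exact div_nonneg (by linarith) hη.le

theorem regret_bound_fin {T : ℕ} (hU : U.Nonempty) (hη : 0 < η) (c : Fin T → X → ℝ)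
    (hc₀ : ∀ t z, 0 ≤ c t z) (hc₁ : ∀ t z, c t z ≤ 1) (w P : Fin T → X → ℝ)
    (hw : ∀ t z, w t z = ∏ s ∈ univ.filter (fun s => s < t), (1 + η * c s z))
    (hP : ∀ t z, P t z = w t z / ∑ z' ∈ U, w t z') :
    U.sup' hU (fun z => ∑ t, c t z) * (1 - η) - log #U / η
      ≤ ∑ t, ∑ z ∈ U, P t z * c t z := by
  set c' : ℕ → X → ℝ := fun n z => if h : n < T then c ⟨n, h⟩ z else 0
  have hc' : ∀ (t : Fin T) z, c' t z = c t z := fun t z => by simp [c', t.isLt]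
  have hw' : ∀ t z, w t z = weight η c' t z := fun t z => by
    rw [hw, weight, ← Fin.prod_filter_lt_eq_prod_range (fun n => 1 + η * c' n z)]
    simp only [hc']
  have bound := regret_bound hU hη (c := c') (fun n z => by dsimp [c']; split_ifs <;> simp [*])
    (fun n z => by dsimp [c']; split_ifs <;> simp [*]) T
  simp only [← Fin.sum_univ_eq_sum_range, hc', expectedLoss] at bound
  convert bound using 4 with t - z -
  rw [hP, hw', totalWeight]
  simp only [hw']

end MultiplicativeWeights

theorem stmt10_general {X Y : Type*} (m T k : ℕ)
    (S : Fin m → X × Y) (p : Fin m → ℝ) (hp : ∀ i, 0 < p i) (hp1 : ∑ i, p i = 1)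
    (U : X → Finset X) (hUne : ∀ x, (U x).Nonempty) (hUk : ∀ x, (U x).card ≤ k)
    (hs : Fin T → X → Y) (η : ℝ) (hη : 0 < η)
    (w : Fin T → X → Fin m → ℝ)
    (hw : ∀ t z i, w t z i = ∏ s ∈ Finset.univ.filter (fun s => s < t),
        (1 + η * (if hs s z ≠ (S i).2 then (1:ℝ) else 0)))
    (P : Fin T → X → Fin m → ℝ)
    (hP : ∀ t z i, P t z i = w t z i / ∑ z' ∈ U (S i).1, w t z' i) :
    (∑ i, p i * (U (S i).1).sup'
          (hUne (S i).1) (fun z => ∑ t, (if hs t z ≠ (S i).2 then (1:ℝ) else 0)))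
        * (1 - η) - Real.log k / η
      ≤ ∑ t, ∑ i, ∑ z ∈ U (S i).1,
          p i * P t z i * (if hs t z ≠ (S i).2 then (1:ℝ) else 0) := by
  have per_example : ∀ i, (U (S i).1).sup' (hUne (S i).1)
        (fun z => ∑ t, (if hs t z ≠ (S i).2 then (1:ℝ) else 0)) * (1 - η) - log k / η
      ≤ ∑ t, ∑ z ∈ U (S i).1, P t z i * (if hs t z ≠ (S i).2 then (1:ℝ) else 0) := by
    intro i
    have hcard : log #(U (S i).1) ≤ log k :=
      log_le_log (by exact_mod_cast (hUne _).card_pos) (by exact_mod_cast hUk _)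
    refine le_trans ?_ (MultiplicativeWeights.regret_bound_fin (hUne _) hη _
      (fun t z => by split_ifs <;> norm_num) (fun t z => by split_ifs <;> norm_num)
      (fun t z => w t z i) (fun t z => P t z i) (fun t z => hw t z i) (fun t z => hP t z i))
    gcongr
  calc _ = ∑ i, p i * ((U (S i).1).sup' (hUne (S i).1)
          (fun z => ∑ t, (if hs t z ≠ (S i).2 then (1:ℝ) else 0)) * (1 - η) - log k / η) := by
        simp only [mul_sub, mul_one, sum_sub_distrib, ← mul_assoc, ← sum_mul, hp1, one_mul]
    _ ≤ ∑ i, p i * ∑ t, ∑ z ∈ U (S i).1, P t z i * (if hs t z ≠ (S i).2 then (1:ℝ) else 0) :=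
        sum_le_sum fun i _ => mul_le_mul_of_nonneg_left (per_example i) (hp i).le
    _ = _ := by
        simp only [mul_sum, mul_assoc]
        exact sum_comm

/-- Weighted extension of the Feige–Mansour–Schapire core inequality.
With per-example weights `p_i > 0` summing to 1, perturbation sets of size at most `k`,
multiplicative weight update `w_{t+1}(z,i) = (1 + η·1[h_t(z)≠y_i]) w_t(z,i)` (from `w_1 ≡ 1`)
and `P^t(z,i) = w_t(z,i)/Σ_{z'} w_t(z',i)`, the online loss `L^{ON}_T` and the benchmark
`L* = Σ_i p_i max_{z∈U(x_i)} Σ_t 1[h_t(z)≠y_i]` satisfy `L*(1−η) − (ln k)/η ≤ L^{ON}_T`. -/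
theorem stmt10 {X Y : Type*} (m T k : ℕ) (hm : 0 < m) (hk : 2 ≤ k)
    (S : Fin m → X × Y) (p : Fin m → ℝ) (hp : ∀ i, 0 < p i) (hp1 : ∑ i, p i = 1)
    (U : X → Finset X) (hUne : ∀ x, (U x).Nonempty) (hUk : ∀ x, (U x).card ≤ k)
    (hs : Fin T → X → Y) (η : ℝ) (hη : 0 < η)
    (w : Fin T → X → Fin m → ℝ)
    (hw : ∀ t z i, w t z i = ∏ s ∈ Finset.univ.filter (fun s => s < t),
        (1 + η * (if hs s z ≠ (S i).2 then (1:ℝ) else 0)))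
    (P : Fin T → X → Fin m → ℝ)
    (hP : ∀ t z i, P t z i = w t z i / ∑ z' ∈ U (S i).1, w t z' i) :
    (∑ i, p i * (U (S i).1).sup'
          (hUne (S i).1) (fun z => ∑ t, (if hs t z ≠ (S i).2 then (1:ℝ) else 0)))
        * (1 - η) - Real.log k / η
      ≤ ∑ t, ∑ i, ∑ z ∈ U (S i).1,
          p i * P t z i * (if hs t z ≠ (S i).2 then (1:ℝ) else 0) :=
  stmt10_general m T k S p hp hp1 U hUne hUk hs η hη w hw P hP
end
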